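/- Work in ℝ² equipped with the Euclidean metric d, and let P be the 12-point set { (10a + i, j) : a ∈ {0,1,2}, i ∈ {0,1}, j ∈ {0,1} } (three axis-aligned unit squares whose pairwise separation exceeds their diameter), with k = 4. Then NR(i) = 1 for every i ∈ P, and for every subset S ⊆ P with |S| ≤ 4 there exists a point i ∈ P with d(i,S) ≥ √2 = √2·NR(i). (In Euclidean space of dimension at least 2, no centers algorithm can be α-fair for any α < √2.) -/

import Mathlib

/-!
Distinct points of the integer lattice are at distance at least 1, and every point of a unit square
has two neighbours at distance exactly 1, so with `|P| / k = 3` every neighborhood radius is 1.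
Four centers cannot meet all three squares twice, so some square contains at most one center `c`;
the corner of that square opposite to `c` is at distance `√2` from `c` and farther from every other
square.
-/

open Finset

/-- The neighborhood radius of `x` with respect to population `P` and parameter `k`. -/
noncomputable def NR {X : Type*} [MetricSpace X] (P : Finset X) (k : ℕ) (x : X) : ℝ :=
  sInf {r : ℝ | 0 ≤ r ∧ (P.card : ℝ) / (k : ℝ) ≤ ((P.filter fun p => dist x p ≤ r).card : ℝ)}

/-- Three axis-aligned unit squares in the Euclidean plane, separated by distance 10 − 1 > √2. -/
noncomputable def threeSquaresEuclidean : Finset (EuclideanSpace ℝ (Fin 2)) := by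
  classical
  exact (Finset.range 3 ×ˢ Finset.range 2 ×ˢ Finset.range 2).image fun t =>
    (WithLp.toLp 2 ![(10 * t.1 + t.2.1 : ℝ), (t.2.2 : ℝ)] : EuclideanSpace ℝ (Fin 2))

theorem NR_eq_of_le_card_of_forall_lt {X : Type*} [MetricSpace X] {P : Finset X} {k : ℕ} {x : X}
    {r : ℝ} (hr : 0 ≤ r) (hcard : (#P : ℝ) / k ≤ #(P.filter fun p => dist x p ≤ r))
    (hlt : ∀ s < r, (#(P.filter fun p => dist x p ≤ s) : ℝ) < #P / k) :
    NR P k x = r :=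
  IsLeast.csInf_eq ⟨⟨hr, hcard⟩, fun _s ⟨_, hs⟩ => not_lt.1 fun h => (hlt _ h).not_ge hs⟩

theorem EuclideanSpace.one_le_dist_of_ne_of_int {ι : Type*} [Fintype ι]
    {u v : EuclideanSpace ℝ ι} (hu : ∀ i, ∃ m : ℤ, u i = m) (hv : ∀ i, ∃ m : ℤ, v i = m)
    (huv : u ≠ v) : 1 ≤ dist u v := by
  obtain ⟨i, hi⟩ : ∃ i, u i ≠ v i := by
    by_contra! h
    exact huv (PiLp.ext h)
  obtain ⟨m, hm⟩ := hu i
  obtain ⟨n, hn⟩ := hv i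
  rw [hm, hn, Ne, Int.cast_inj] at hi
  calc (1 : ℝ) ≤ ((|m - n| : ℤ) : ℝ) := by exact_mod_cast Int.one_le_abs (sub_ne_zero.2 hi)
    _ = dist (u i) (v i) := by rw [hm, hn, Real.dist_eq]; push_cast; rfl
    _ ≤ dist u v := PiLp.dist_apply_le u v i

namespace ThreeSquares

noncomputable def corner (a x y : ℕ) : EuclideanSpace ℝ (Fin 2) :=
  WithLp.toLp 2 ![(10 * a + x : ℝ), (y : ℝ)]

theorem mem_threeSquaresEuclidean {v : EuclideanSpace ℝ (Fin 2)} :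
    v ∈ threeSquaresEuclidean ↔ ∃ a < 3, ∃ x < 2, ∃ y < 2, v = corner a x y := by
  simp only [threeSquaresEuclidean, corner, mem_image, mem_product, mem_range, Prod.exists]
  grind

theorem corner_mem {a x y : ℕ} (ha : a < 3) (hx : x < 2) (hy : y < 2) :
    corner a x y ∈ threeSquaresEuclidean :=
  mem_threeSquaresEuclidean.2 ⟨a, ha, x, hx, y, hy, rfl⟩

theorem corner_inj {a x y a' x' y' : ℕ} (hx : x < 2) (hx' : x' < 2) :
    corner a x y = corner a' x' y' ↔ a = a' ∧ x = x' ∧ y = y' := by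
  refine ⟨fun h => ?_, by rintro ⟨rfl, rfl, rfl⟩; rfl⟩
  have h0 := congrArg (· 0) h
  have h1 := congrArg (· 1) h
  simp only [corner, PiLp.toLp_apply, Matrix.cons_val_zero, Matrix.cons_val_one] at h0 h1
  norm_cast at h0 h1
  omega

theorem card_threeSquaresEuclidean : #threeSquaresEuclidean = 12 := by
  rw [threeSquaresEuclidean, card_image_of_injOn]
  · rfl
  · rintro ⟨a, x, y⟩ h ⟨a', x', y'⟩ h' heq
    simp only [coe_product, Set.mem_prod, mem_coe, mem_range] at h h'
    simpa using (corner_inj h.2.1 h'.2.1).1 heq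

theorem dist_corner (a x y a' x' y' : ℕ) :
    dist (corner a x y) (corner a' x' y') =
      √(((10 * a + x : ℝ) - (10 * a' + x')) ^ 2 + ((y : ℝ) - y') ^ 2) := by
  simp [EuclideanSpace.dist_eq, Fin.sum_univ_two, corner, Real.dist_eq, sq_abs]

theorem one_le_dist {u v : EuclideanSpace ℝ (Fin 2)} (hu : u ∈ threeSquaresEuclidean)
    (hv : v ∈ threeSquaresEuclidean) (huv : u ≠ v) : 1 ≤ dist u v := by
  have hint : ∀ w ∈ threeSquaresEuclidean, ∀ i, ∃ m : ℤ, w i = m := by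
    intro w hw i
    obtain ⟨a, -, x, -, y, -, rfl⟩ := mem_threeSquaresEuclidean.1 hw
    fin_cases i
    · exact ⟨10 * a + x, by simp [corner]⟩
    · exact ⟨y, by simp [corner]⟩
  exact EuclideanSpace.one_le_dist_of_ne_of_int (hint u hu) (hint v hv) huv

theorem sqrt_two_le_dist_corner {a x y a' x' y' : ℕ} (hx : x < 2) (hx' : x' < 2) (ha : a ≠ a') :
    √2 ≤ dist (corner a x y) (corner a' x' y') := by
  have hx1 : (x : ℝ) ≤ 1 := by exact_mod_cast Nat.le_of_lt_succ hx
  have hx1' : (x' : ℝ) ≤ 1 := by exact_mod_cast Nat.le_of_lt_succ hx'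
  have hsep : 9 ≤ |(10 * a + x : ℝ) - (10 * a' + x')| := by
    rcases Nat.lt_or_gt_of_ne ha with h | h
    · have : (a : ℝ) + 1 ≤ a' := by exact_mod_cast h
      rw [abs_sub_comm]
      exact le_abs.2 (Or.inl (by linarith [x.cast_nonneg (α := ℝ)]))
    · have : (a' : ℝ) + 1 ≤ a := by exact_mod_cast h
      exact le_abs.2 (Or.inl (by linarith [x'.cast_nonneg (α := ℝ)]))
  calc √2 ≤ 9 := by rw [Real.sqrt_le_left (by norm_num)]; norm_num
    _ ≤ dist (corner a x y 0) (corner a' x' y' 0) := by simpa [corner, Real.dist_eq] using hsep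
    _ ≤ _ := PiLp.dist_apply_le _ _ 0

theorem dist_corner_opposite {a x y : ℕ} (hx : x < 2) (hy : y < 2) :
    dist (corner a (1 - x) (1 - y)) (corner a x y) = √2 := by
  rw [dist_corner]
  interval_cases x <;> interval_cases y <;> norm_num

theorem dist_corner_flip_x_le {a x y : ℕ} (hx : x < 2) :
    dist (corner a x y) (corner a (1 - x) y) ≤ 1 := by
  rw [dist_corner]
  interval_cases x <;> norm_num

theorem dist_corner_flip_y_le {a x y : ℕ} (hy : y < 2) :
    dist (corner a x y) (corner a x (1 - y)) ≤ 1 := by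
  rw [dist_corner]
  interval_cases y <;> norm_num

theorem three_le_card_filter_dist_le_one {a x y : ℕ} (ha : a < 3) (hx : x < 2) (hy : y < 2) :
    3 ≤ #(threeSquaresEuclidean.filter fun p => dist (corner a x y) p ≤ 1) := by
  have hsub : {corner a x y, corner a (1 - x) y, corner a x (1 - y)} ⊆
      threeSquaresEuclidean.filter fun p => dist (corner a x y) p ≤ 1 := by
    simp only [insert_subset_iff, singleton_subset_iff, mem_filter, dist_self, zero_le_one,
      and_true]
    exact ⟨corner_mem ha hx hy, ⟨corner_mem ha (by omega) hy, dist_corner_flip_x_le hx⟩,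
      ⟨corner_mem ha hx (by omega), dist_corner_flip_y_le hy⟩⟩
  refine le_of_eq_of_le (card_eq_three.2 ⟨_, _, _, ?_, ?_, ?_, rfl⟩).symm (card_le_card hsub)
  · rw [Ne, corner_inj hx (by omega)]; omega
  · rw [Ne, corner_inj hx hx]; omega
  · rw [Ne, corner_inj (by omega) hx]; omega

theorem card_filter_dist_le_of_lt_one {v : EuclideanSpace ℝ (Fin 2)}
    (hv : v ∈ threeSquaresEuclidean) {r : ℝ} (hr : r < 1) :
    #(threeSquaresEuclidean.filter fun p => dist v p ≤ r) ≤ 1 := by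
  refine card_le_one.2 fun p hp q hq => ?_
  have hself : ∀ w ∈ threeSquaresEuclidean.filter fun p => dist v p ≤ r, w = v := by
    intro w hw
    rw [mem_filter] at hw
    by_contra hwv
    linarith [one_le_dist hv hw.1 (Ne.symm hwv), hw.2]
  rw [hself p hp, hself q hq]

theorem NR_eq_one {v : EuclideanSpace ℝ (Fin 2)} (hv : v ∈ threeSquaresEuclidean) :
    NR threeSquaresEuclidean 4 v = 1 := by
  obtain ⟨a, ha, x, hx, y, hy, rfl⟩ := mem_threeSquaresEuclidean.1 hv
  have hquota : (#threeSquaresEuclidean : ℝ) / (4 : ℕ) = 3 := by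
    rw [card_threeSquaresEuclidean]; norm_num
  refine NR_eq_of_le_card_of_forall_lt zero_le_one ?_ fun r hr => ?_ <;> rw [hquota]
  · exact_mod_cast three_le_card_filter_dist_le_one ha hx hy
  · exact_mod_cast (card_filter_dist_le_of_lt_one hv hr).trans_lt (by norm_num : 1 < 3)

noncomputable def squareIndex (v : EuclideanSpace ℝ (Fin 2)) : ℕ :=
  ⌊v 0 / 10⌋₊

theorem squareIndex_corner {a x y : ℕ} (hx : x < 2) : squareIndex (corner a x y) = a := by
  have hx1 : (x : ℝ) ≤ 1 := by exact_mod_cast Nat.le_of_lt_succ hx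
  simp only [squareIndex, corner, PiLp.toLp_apply, Matrix.cons_val_zero]
  rw [Nat.floor_eq_iff (by positivity)]
  constructor <;> linarith [x.cast_nonneg (α := ℝ)]

theorem exists_far_of_card_squareIndex_le_one {S : Finset (EuclideanSpace ℝ (Fin 2))}
    (hS : S ⊆ threeSquaresEuclidean) {a : ℕ} (ha : a < 3)
    (hfib : #(S.filter fun s => squareIndex s = a) ≤ 1) :
    ∃ i ∈ threeSquaresEuclidean, ∀ s ∈ S, √2 ≤ dist i s := by
  obtain ⟨x₀, hx₀, y₀, hy₀, hcenter⟩ :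
      ∃ x₀ < 2, ∃ y₀ < 2, ∀ s ∈ S, squareIndex s = a → s = corner a x₀ y₀ := by
    rcases (S.filter fun s => squareIndex s = a).eq_empty_or_nonempty with hempty | ⟨c, hc⟩
    · refine ⟨0, two_pos, 0, two_pos, fun s hs hsa => ?_⟩
      exact absurd (mem_filter.2 ⟨hs, hsa⟩) (hempty ▸ notMem_empty s)
    · obtain ⟨a₀, -, x₀, hx₀, y₀, hy₀, rfl⟩ := mem_threeSquaresEuclidean.1 (hS (mem_filter.1 hc).1)
      have ha₀ : a₀ = a := (squareIndex_corner hx₀).symm.trans (mem_filter.1 hc).2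
      subst ha₀
      exact ⟨x₀, hx₀, y₀, hy₀, fun s hs hsa => card_le_one.1 hfib _ (mem_filter.2 ⟨hs, hsa⟩) _ hc⟩
  refine ⟨corner a (1 - x₀) (1 - y₀), corner_mem ha (by omega) (by omega), fun s hs => ?_⟩
  obtain ⟨a', -, x', hx', y', -, rfl⟩ := mem_threeSquaresEuclidean.1 (hS hs)
  by_cases haa' : a' = a
  · rw [hcenter _ hs (by rw [squareIndex_corner hx', haa']), dist_corner_opposite hx₀ hy₀]
  · exact sqrt_two_le_dist_corner (by omega) hx' (Ne.symm haa')

end ThreeSquares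

/-- On three well-separated unit squares in the Euclidean plane with `k = 4`, every point
has neighborhood radius 1, yet every choice of at most 4 centers leaves some point at
distance at least `√2 = √2·NR(i)` from all centers. -/
theorem euclidean_squares_sqrt_two_lower_bound :
    (∀ i ∈ threeSquaresEuclidean, NR threeSquaresEuclidean 4 i = 1) ∧
    ∀ S : Finset (EuclideanSpace ℝ (Fin 2)), S ⊆ threeSquaresEuclidean → S.card ≤ 4 →
      ∃ i ∈ threeSquaresEuclidean, ∀ s ∈ S, Real.sqrt 2 ≤ dist i s := by
  refine ⟨fun i hi => ThreeSquares.NR_eq_one hi, fun S hS hcard => ?_⟩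
  obtain ⟨a, ha, hfib⟩ := exists_card_fiber_lt_of_card_lt_mul (f := ThreeSquares.squareIndex)
    (t := range 3) (n := 2) (s := S) (by rw [card_range]; omega)
  exact ThreeSquares.exists_far_of_card_squareIndex_le_one hS (mem_range.1 ha)
    (Nat.le_of_lt_succ hfib)
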